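/- arXiv:2107.13281 — 2 statements merged into one kernel-verified Lean document; each statement's English description precedes it below -/
import Mathlib

section
/- Let u, v, w, z : ℝ² → ℝ be measurable. Then, with all integrals taken in the Lebesgue sense with values in [0, ∞], ∫_{ℝ²}∫_{ℝ²} ln(1 + |x − y|) |u(x)v(x)| |w(y)z(y)| dx dy ≤ ‖u‖_* ‖v‖_* ‖w‖₂ ‖z‖₂ + ‖u‖₂ ‖v‖₂ ‖w‖_* ‖z‖_*, where ‖u‖₂ = (∫_{ℝ²} u(x)² dx)^{1/2} and ‖u‖_* = (∫_{ℝ²} ln(1 + |x|) u(x)² dx)^{1/2}. -/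
open MeasureTheory Real ENNReal

/-!
Since `log (1 + ‖x - y‖) ≤ log (1 + ‖x‖) + log (1 + ‖y‖)`, the kernel is dominated by a sum of a
function of `x` and a function of `y`, so the double integral splits into two products of single
integrals. Each factor `∫ |u v|`, with or without the weight `log (1 + ‖x‖)`, is then bounded by
Cauchy–Schwarz; the weighted case is the unweighted one applied to `√ρ u` and `√ρ v`.
-/

theorem log_one_add_norm_sub_le {E : Type*} [SeminormedAddCommGroup E] (x y : E) :
    Real.log (1 + ‖x - y‖) ≤ Real.log (1 + ‖x‖) + Real.log (1 + ‖y‖) := by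
  rw [← Real.log_mul (by positivity) (by positivity)]
  apply Real.log_le_log (by positivity)
  nlinarith [norm_sub_le x y, norm_nonneg x, norm_nonneg y]

section CauchySchwarz

variable {α : Type*} [MeasurableSpace α] {μ : Measure α} {u v : α → ℝ}

theorem lintegral_ofReal_abs_mul_le (hu : AEMeasurable u μ) (hv : AEMeasurable v μ) :
    ∫⁻ a, ENNReal.ofReal |u a * v a| ∂μ ≤
      (∫⁻ a, ENNReal.ofReal (u a ^ 2) ∂μ) ^ (1 / 2 : ℝ) *
        (∫⁻ a, ENNReal.ofReal (v a ^ 2) ∂μ) ^ (1 / 2 : ℝ) := by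
  have hsq (f : α → ℝ) (a : α) : ENNReal.ofReal |f a| ^ (2 : ℝ) = ENNReal.ofReal (f a ^ 2) := by
    rw [ENNReal.ofReal_rpow_of_nonneg (abs_nonneg _) (by norm_num)]
    norm_num
  simp_rw [abs_mul, ENNReal.ofReal_mul (abs_nonneg _), ← hsq]
  exact ENNReal.lintegral_mul_le_Lp_mul_Lq μ HolderConjugate.two_two
    hu.abs.ennreal_ofReal hv.abs.ennreal_ofReal

theorem lintegral_ofReal_mul_abs_mul_le {ρ : α → ℝ} (hρ : 0 ≤ ρ) (hρm : AEMeasurable ρ μ)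
    (hu : AEMeasurable u μ) (hv : AEMeasurable v μ) :
    ∫⁻ a, ENNReal.ofReal (ρ a) * ENNReal.ofReal |u a * v a| ∂μ ≤
      (∫⁻ a, ENNReal.ofReal (ρ a * u a ^ 2) ∂μ) ^ (1 / 2 : ℝ) *
        (∫⁻ a, ENNReal.ofReal (ρ a * v a ^ 2) ∂μ) ^ (1 / 2 : ℝ) := by
  have hsq (f : α → ℝ) (a : α) : (√(ρ a) * f a) ^ 2 = ρ a * f a ^ 2 := by
    rw [mul_pow, sq_sqrt (hρ a)]
  have hprod (a : α) : |√(ρ a) * u a * (√(ρ a) * v a)| = ρ a * |u a * v a| := by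
    rw [mul_mul_mul_comm, ← sq, sq_sqrt (hρ a), abs_mul, abs_of_nonneg (hρ a)]
  simpa only [hprod, hsq, ENNReal.ofReal_mul (hρ _)] using
    lintegral_ofReal_abs_mul_le (u := fun a => √(ρ a) * u a) (v := fun a => √(ρ a) * v a)
      (hρm.sqrt.mul hu) (hρm.sqrt.mul hv)

end CauchySchwarz

theorem lintegral_lintegral_mul_le_of_le_add {α β : Type*} [MeasurableSpace α]
    [MeasurableSpace β] {μ : Measure α} {ν : Measure β} {K : α → β → ℝ≥0∞}
    {a f : α → ℝ≥0∞} {b g : β → ℝ≥0∞} (hK : ∀ x y, K x y ≤ a x + b y)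
    (ha : Measurable a) (hf : Measurable f) (hb : Measurable b) (hg : Measurable g) :
    ∫⁻ x, ∫⁻ y, K x y * f x * g y ∂ν ∂μ ≤
      (∫⁻ x, a x * f x ∂μ) * (∫⁻ y, g y ∂ν) + (∫⁻ x, f x ∂μ) * ∫⁻ y, b y * g y ∂ν :=
  calc ∫⁻ x, ∫⁻ y, K x y * f x * g y ∂ν ∂μ
      ≤ ∫⁻ x, ∫⁻ y, a x * f x * g y + f x * (b y * g y) ∂ν ∂μ := by
        gcongr with x y
        calc K x y * f x * g y ≤ (a x + b y) * f x * g y := by gcongr; exact hK x y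
          _ = _ := by ring
    _ = ∫⁻ x, a x * f x * ∫⁻ y, g y ∂ν + f x * ∫⁻ y, b y * g y ∂ν ∂μ := by
        refine lintegral_congr fun x => ?_
        rw [lintegral_add_left (hg.const_mul _), lintegral_const_mul _ hg,
          lintegral_const_mul (f := fun y => b y * g y) _ (hb.mul hg)]
    _ = _ := by
        rw [lintegral_add_left (f := fun x => a x * f x * _) ((ha.mul hf).mul_const _),
          lintegral_mul_const (f := fun x => a x * f x) _ (ha.mul hf),
          lintegral_mul_const _ hf]

theorem stmt_1 (u v w z : EuclideanSpace ℝ (Fin 2) → ℝ)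
    (hu : Measurable u) (hv : Measurable v) (hw : Measurable w) (hz : Measurable z) :
    ∫⁻ x, ∫⁻ y, ENNReal.ofReal (Real.log (1 + ‖x - y‖)) *
        ENNReal.ofReal |u x * v x| * ENNReal.ofReal |w y * z y| ≤
      (∫⁻ x, ENNReal.ofReal (Real.log (1 + ‖x‖) * (u x) ^ 2)) ^ (1 / 2 : ℝ) *
        (∫⁻ x, ENNReal.ofReal (Real.log (1 + ‖x‖) * (v x) ^ 2)) ^ (1 / 2 : ℝ) *
        (∫⁻ x, ENNReal.ofReal ((w x) ^ 2)) ^ (1 / 2 : ℝ) *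
        (∫⁻ x, ENNReal.ofReal ((z x) ^ 2)) ^ (1 / 2 : ℝ) +
      (∫⁻ x, ENNReal.ofReal ((u x) ^ 2)) ^ (1 / 2 : ℝ) *
        (∫⁻ x, ENNReal.ofReal ((v x) ^ 2)) ^ (1 / 2 : ℝ) *
        (∫⁻ x, ENNReal.ofReal (Real.log (1 + ‖x‖) * (w x) ^ 2)) ^ (1 / 2 : ℝ) *
        (∫⁻ x, ENNReal.ofReal (Real.log (1 + ‖x‖) * (z x) ^ 2)) ^ (1 / 2 : ℝ) := by
  set ρ : EuclideanSpace ℝ (Fin 2) → ℝ := fun x => log (1 + ‖x‖)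
  have hρ : 0 ≤ ρ := fun x => log_nonneg (by simp)
  have hρm : Measurable ρ := measurable_log.comp (measurable_const.add measurable_norm)
  have hK (x y : EuclideanSpace ℝ (Fin 2)) :
      ENNReal.ofReal (log (1 + ‖x - y‖)) ≤ ENNReal.ofReal (ρ x) + ENNReal.ofReal (ρ y) :=
    (ENNReal.ofReal_le_ofReal (log_one_add_norm_sub_le x y)).trans ENNReal.ofReal_add_le
  refine (lintegral_lintegral_mul_le_of_le_add hK hρm.ennreal_ofReal
    (hu.mul hv).abs.ennreal_ofReal hρm.ennreal_ofReal (hw.mul hz).abs.ennreal_ofReal).trans ?_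
  simp only [mul_assoc (_ ^ (1 / 2 : ℝ) * _)]
  gcongr
  · exact lintegral_ofReal_mul_abs_mul_le hρ hρm.aemeasurable hu.aemeasurable hv.aemeasurable
  · exact lintegral_ofReal_abs_mul_le hw.aemeasurable hz.aemeasurable
  · exact lintegral_ofReal_abs_mul_le hu.aemeasurable hv.aemeasurable
  · exact lintegral_ofReal_mul_abs_mul_le hρ hρm.aemeasurable hw.aemeasurable hz.aemeasurable
end

section
/- Let R > 0, let y ∈ ℝ² with |y| ≥ 2R, and let u : ℝ² → ℝ be measurable. Then ∫_{ℝ²} ln(1 + |x|) u(x − y)² dx ≥ (1/2) ln(1 + |y|) ∫_{B_R(0)} u(x)² dx, where B_R(0) is the Euclidean ball of radius R centered at the origin. -/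
set_option maxHeartbeats 800000


open MeasureTheory

theorem stmt_3 (R : ℝ) (hR : 0 < R) (y : EuclideanSpace ℝ (Fin 2)) (hy : 2 * R ≤ ‖y‖)
    (u : EuclideanSpace ℝ (Fin 2) → ℝ) (hu : Measurable u) :
    ENNReal.ofReal ((1 / 2) * Real.log (1 + ‖y‖)) *
        ∫⁻ x in Metric.ball (0 : EuclideanSpace ℝ (Fin 2)) R, ENNReal.ofReal ((u x) ^ 2) ≤
      ∫⁻ x, ENNReal.ofReal (Real.log (1 + ‖x‖) * (u (x - y)) ^ 2) := by
  have hynorm : 0 < ‖y‖ := lt_of_lt_of_le (by linarith) hy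
  set c : ℝ := (1 / 2) * Real.log (1 + ‖y‖) with hc
  have hc0 : 0 ≤ c := by
    apply mul_nonneg (by norm_num)
    apply Real.log_nonneg; linarith
  -- translation
  have htrans : ∫⁻ x, ENNReal.ofReal (Real.log (1 + ‖x‖) * (u (x - y)) ^ 2)
      = ∫⁻ z, ENNReal.ofReal (Real.log (1 + ‖z + y‖) * (u z) ^ 2) := by
    have := lintegral_add_right_eq_self
      (μ := (volume : Measure (EuclideanSpace ℝ (Fin 2))))
      (fun x => ENNReal.ofReal (Real.log (1 + ‖x + y‖) * (u x) ^ 2)) (-y)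
    simp only [neg_add_cancel_right] at this
    rw [← this]
    simp_rw [sub_eq_add_neg]
  rw [htrans]
  -- restrict to ball
  calc ENNReal.ofReal c * ∫⁻ x in Metric.ball (0 : EuclideanSpace ℝ (Fin 2)) R,
        ENNReal.ofReal ((u x) ^ 2)
      = ∫⁻ x in Metric.ball (0 : EuclideanSpace ℝ (Fin 2)) R,
        ENNReal.ofReal (c * (u x) ^ 2) := by
        rw [← lintegral_const_mul _ (by measurability)]
        congr 1; ext x
        rw [ENNReal.ofReal_mul hc0]
    _ ≤ ∫⁻ x in Metric.ball (0 : EuclideanSpace ℝ (Fin 2)) R,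
        ENNReal.ofReal (Real.log (1 + ‖x + y‖) * (u x) ^ 2) := by
        apply setLIntegral_mono (by measurability)
        intro z hz
        apply ENNReal.ofReal_le_ofReal
        apply mul_le_mul_of_nonneg_right _ (sq_nonneg _)
        have hz' : ‖z‖ < R := by simpa using hz
        have h1 : ‖y‖ / 2 ≤ ‖z + y‖ := by
          have := norm_add_le (-z) (z + y)
          simp only [neg_add_cancel_left, norm_neg] at this
          linarith
        have h2 : Real.sqrt (1 + ‖y‖) ≤ 1 + ‖z + y‖ := by
          have hs : Real.sqrt (1 + ‖y‖) ≤ 1 + ‖y‖ / 2 := by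
            rw [show (1 : ℝ) + ‖y‖ / 2 = Real.sqrt ((1 + ‖y‖ / 2) ^ 2) from
              (Real.sqrt_sq (by linarith)).symm]
            apply Real.sqrt_le_sqrt; nlinarith
          linarith
        have := Real.log_le_log (Real.sqrt_pos.mpr (by linarith)) h2
        rw [Real.log_sqrt (by linarith)] at this
        rw [hc]; linarith
    _ ≤ ∫⁻ x, ENNReal.ofReal (Real.log (1 + ‖x + y‖) * (u x) ^ 2) :=
        setLIntegral_le_lintegral _ _
end
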